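/- arXiv:1807.03451 — 7 statements merged into one kernel-verified Lean document; each statement's English description precedes it below -/
import Mathlib

section
/- Let β, γ > 0 and let S, I : ℝ → ℝ be differentiable on [0, ∞) with S'(t) = -β·S(t)·I(t) + γ·I(t) and I'(t) = β·S(t)·I(t) - γ·I(t) for all t ≥ 0, S(0) ≥ 0, I(0) > 0, and set N = S(0) + I(0). If N·β ≤ γ (i.e., the basic reproduction number R₀ = Nβ/γ ≤ 1), then I(t) → 0 and S(t) → N as t → ∞. -/
/-!
`S + I` is conserved, so `S = N - I` and `I' = (βN - γ) I - β I²`. Since `I' = (βS - γ) I` is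
linear in `I`, backward uniqueness for this ODE keeps `I` positive. Then
`(1/I)' = (γ - βN)/I + β ≥ β` when `Nβ ≤ γ`, so `1/I(t) ≥ 1/I(0) + βt`, which forces `I(t) → 0`
and `S(t) = N - I(t) → N`.
-/

open Set Filter Topology

theorem eq_of_hasDerivWithinAt_Ici_zero {f : ℝ → ℝ} {t₀ : ℝ}
    (hf : ∀ t ∈ Ici t₀, HasDerivWithinAt f 0 (Ici t₀) t) : ∀ t ∈ Ici t₀, f t = f t₀ := by
  intro t ht
  exact constant_of_has_deriv_right_zero
    (fun x hx => (hf x hx.1).continuousWithinAt.mono Icc_subset_Ici_self)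
    (fun x hx => (hf x hx.1).mono (Ici_subset_Ici.2 hx.1)) t ⟨ht, le_rfl⟩

theorem eq_zero_of_hasDerivWithinAt_mul_of_eq_zero_right {f a : ℝ → ℝ} {t₀ t₁ : ℝ}
    (ha : ContinuousOn a (Icc t₀ t₁)) (hf : ContinuousOn f (Icc t₀ t₁))
    (hf' : ∀ t ∈ Ioc t₀ t₁, HasDerivWithinAt f (a t * f t) (Iic t) t) (h₁ : f t₁ = 0) :
    ∀ t ∈ Icc t₀ t₁, f t = 0 := by
  -- `f` and `0` solve `x' = a t * x`, which is Lipschitz in `x` with constant `sup |a|`.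
  obtain ⟨C, hC⟩ := isCompact_Icc.exists_bound_of_continuousOn ha
  refine ODE_solution_unique_of_mem_Icc_left (v := fun t x => a t * x) (s := fun _ => univ)
    (g := fun _ => 0) (K := C.toNNReal) (fun t ht => ?_) hf hf' (fun _ _ => mem_univ _)
    continuousOn_const
    (fun t _ => by simpa using hasDerivWithinAt_const t (Iic t) (0 : ℝ))
    (fun _ _ => mem_univ _) h₁
  refine ((lipschitzWith_smul (a t)).weaken ?_).lipschitzOnWith
  rw [← NNReal.coe_le_coe, coe_nnnorm, Real.coe_toNNReal']
  exact (hC t (Ioc_subset_Icc_self ht)).trans (le_max_left _ _)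

theorem pos_of_hasDerivWithinAt_mul {f a : ℝ → ℝ} {t₀ : ℝ} (ha : ContinuousOn a (Ici t₀))
    (hf : ∀ t ∈ Ici t₀, HasDerivWithinAt f (a t * f t) (Ici t₀) t) (h₀ : 0 < f t₀) :
    ∀ t ∈ Ici t₀, 0 < f t := by
  by_contra! ⟨T, hT, hfT⟩
  have hcont : ContinuousOn f (Ici t₀) := fun t ht => (hf t ht).continuousWithinAt
  obtain ⟨t₁, ht₁, hft₁⟩ := intermediate_value_Icc' (mem_Ici.1 hT)
    (hcont.mono Icc_subset_Ici_self) ⟨hfT, h₀.le⟩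
  have hderiv : ∀ t ∈ Ioc t₀ t₁, HasDerivWithinAt f (a t * f t) (Iic t) t := fun t ht =>
    ((hf t (Ioc_subset_Icc_self.trans Icc_subset_Ici_self ht)).hasDerivAt
      (Ici_mem_nhds ht.1)).hasDerivWithinAt
  have := eq_zero_of_hasDerivWithinAt_mul_of_eq_zero_right (ha.mono Icc_subset_Ici_self)
    (hcont.mono Icc_subset_Ici_self) hderiv hft₁ t₀ ⟨le_rfl, ht₁.1⟩
  linarith

section Decay

variable {f : ℝ → ℝ} {c β t₀ : ℝ}

theorem monotoneOn_inv_sub_mul_of_hasDerivWithinAt (hc : c ≤ 0) (hpos : ∀ t ∈ Ici t₀, 0 < f t)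
    (hf : ∀ t ∈ Ici t₀, HasDerivWithinAt f (c * f t - β * f t ^ 2) (Ici t₀) t) :
    MonotoneOn (fun t => (f t)⁻¹ - β * t) (Ici t₀) := by
  have hcont : ContinuousOn f (Ici t₀) := fun t ht => (hf t ht).continuousWithinAt
  refine monotoneOn_of_hasDerivWithinAt_nonneg (f' := fun t => -c / f t) (convex_Ici t₀)
    ((hcont.inv₀ fun t ht => (hpos t ht).ne').sub (continuousOn_const.mul continuousOn_id))
    (fun t ht => ?_) (fun t ht => ?_)
  · rw [interior_Ici] at ht
    have hft := (hpos t (Ioi_subset_Ici_self ht)).ne'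
    have : HasDerivAt (fun t => (f t)⁻¹ - β * t) _ t :=
      (((hf t (Ioi_subset_Ici_self ht)).hasDerivAt (Ici_mem_nhds ht)).inv hft).sub
        ((hasDerivAt_id t).const_mul β)
    refine (this.congr_deriv ?_).hasDerivWithinAt
    field_simp
    ring
  · rw [interior_Ici] at ht
    exact div_nonneg (neg_nonneg.2 hc) (hpos t (Ioi_subset_Ici_self ht)).le

theorem le_inv_add_mul_of_hasDerivWithinAt (hc : c ≤ 0) (hβ : 0 ≤ β)
    (hpos : ∀ t ∈ Ici t₀, 0 < f t)
    (hf : ∀ t ∈ Ici t₀, HasDerivWithinAt f (c * f t - β * f t ^ 2) (Ici t₀) t) :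
    ∀ t ∈ Ici t₀, f t ≤ ((f t₀)⁻¹ + β * (t - t₀))⁻¹ := by
  intro t ht
  have hmono := monotoneOn_inv_sub_mul_of_hasDerivWithinAt hc hpos hf self_mem_Ici ht ht
  have hden : 0 < (f t₀)⁻¹ + β * (t - t₀) :=
    add_pos_of_pos_of_nonneg (inv_pos.2 (hpos t₀ self_mem_Ici)) (mul_nonneg hβ (sub_nonneg.2 ht))
  calc f t = ((f t)⁻¹)⁻¹ := (inv_inv _).symm
    _ ≤ ((f t₀)⁻¹ + β * (t - t₀))⁻¹ := inv_anti₀ hden (by simp only at hmono; linarith)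

theorem tendsto_zero_of_hasDerivWithinAt_mul_sub_sq (hc : c ≤ 0) (hβ : 0 < β)
    (hpos : ∀ t ∈ Ici t₀, 0 < f t)
    (hf : ∀ t ∈ Ici t₀, HasDerivWithinAt f (c * f t - β * f t ^ 2) (Ici t₀) t) :
    Tendsto f atTop (𝓝 0) := by
  have hbound : Tendsto (fun t => ((f t₀)⁻¹ + β * (t - t₀))⁻¹) atTop (𝓝 0) :=
    (tendsto_atTop_add_const_left _ _ <|
      (tendsto_atTop_add_const_right _ _ tendsto_id).const_mul_atTop hβ).inv_tendsto_atTop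
  refine squeeze_zero' ?_ ?_ hbound <;> filter_upwards [eventually_ge_atTop t₀] with t ht
  · exact (hpos t ht).le
  · exact le_inv_add_mul_of_hasDerivWithinAt hc hβ.le hpos hf t ht

end Decay

theorem stmt_4_general (β γ : ℝ) (hβ : 0 < β) (S I : ℝ → ℝ)
    (hS : ∀ t ∈ Set.Ici (0 : ℝ),
      HasDerivWithinAt S (-β * S t * I t + γ * I t) (Set.Ici 0) t)
    (hI : ∀ t ∈ Set.Ici (0 : ℝ),
      HasDerivWithinAt I (β * S t * I t - γ * I t) (Set.Ici 0) t)
    (hI0 : 0 < I 0) (N : ℝ) (hN : N = S 0 + I 0)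
    (hR0 : N * β ≤ γ) :
    Filter.Tendsto I Filter.atTop (nhds 0) ∧
      Filter.Tendsto S Filter.atTop (nhds N) := by
  have hSI : ∀ t ∈ Ici (0 : ℝ), S t + I t = N := by
    rw [hN]
    exact eq_of_hasDerivWithinAt_Ici_zero fun t ht =>
      ((hS t ht).add (hI t ht)).congr_deriv (by ring)
  have hIpos : ∀ t ∈ Ici (0 : ℝ), 0 < I t :=
    pos_of_hasDerivWithinAt_mul (a := fun t => β * S t - γ)
      (fun t ht => ((hS t ht).continuousWithinAt.const_mul β).sub continuousWithinAt_const)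
      (fun t ht => (hI t ht).congr_deriv (by ring)) hI0
  have hI' : ∀ t ∈ Ici (0 : ℝ),
      HasDerivWithinAt I ((β * N - γ) * I t - β * I t ^ 2) (Ici 0) t := fun t ht =>
    (hI t ht).congr_deriv (by rw [← hSI t ht]; ring)
  have hIlim := tendsto_zero_of_hasDerivWithinAt_mul_sub_sq (by linarith) hβ hIpos hI'
  have hNI : Tendsto (fun t => N - I t) atTop (𝓝 N) := by
    simpa using tendsto_const_nhds.sub hIlim
  refine ⟨hIlim, hNI.congr' ?_⟩
  filter_upwards [eventually_ge_atTop 0] with t ht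
  linarith [hSI t ht]

/-- SIS ODE with mass action: if `R₀ = Nβ/γ ≤ 1` (i.e. `Nβ ≤ γ`), the disease-free
equilibrium `(N, 0)` is globally attractive: `I(t) → 0` and `S(t) → N`. -/
theorem stmt_4 (β γ : ℝ) (hβ : 0 < β) (hγ : 0 < γ) (S I : ℝ → ℝ)
    (hS : ∀ t ∈ Set.Ici (0 : ℝ),
      HasDerivWithinAt S (-β * S t * I t + γ * I t) (Set.Ici 0) t)
    (hI : ∀ t ∈ Set.Ici (0 : ℝ),
      HasDerivWithinAt I (β * S t * I t - γ * I t) (Set.Ici 0) t)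
    (hS0 : 0 ≤ S 0) (hI0 : 0 < I 0) (N : ℝ) (hN : N = S 0 + I 0)
    (hR0 : N * β ≤ γ) :
    Filter.Tendsto I Filter.atTop (nhds 0) ∧
      Filter.Tendsto S Filter.atTop (nhds N) :=
  stmt_4_general β γ hβ S I hS hI hI0 N hN hR0
end

section
/- Let β, γ > 0 and let S, I : ℝ → ℝ be differentiable on [0, ∞) with S'(t) = -β·S(t)·I(t) + γ·I(t) and I'(t) = β·S(t)·I(t) - γ·I(t) for all t ≥ 0, S(0) ≥ 0, I(0) > 0, and set N = S(0) + I(0). If N·β > γ (i.e., the basic reproduction number R₀ = Nβ/γ > 1), then I(t) → N - γ/β and S(t) → γ/β as t → ∞. -/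
/-!
Since `S' + I' = 0`, the total population `S + I = N` is conserved, so `I` solves the logistic
equation `I' = β I (K - I)` with carrying capacity `K = N - γ / β`, which is positive exactly when
`R₀ > 1`. The logistic vector field is locally Lipschitz, so `I` coincides on `[0, ∞)` with the
explicit solution `K I₀ / (I₀ + (K - I₀) e^{-βKt})`, which tends to `K`; then `S = N - I` tends
to `γ / β`.
-/

open Set Filter Topology

section ODE

variable {E : Type*} [NormedAddCommGroup E] [NormedSpace ℝ E] {f g : ℝ → E} {a : ℝ}

lemma eq_of_hasDerivWithinAt_zero_Ici (hf : ∀ t ∈ Ici a, HasDerivWithinAt f 0 (Ici a) t) :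
    ∀ t ∈ Ici a, f t = f a := fun T hT ↦
  constant_of_has_deriv_right_zero
    (fun t ht ↦ (hf t ht.1).continuousWithinAt.mono Icc_subset_Ici_self)
    (fun t ht ↦ (hf t ht.1).mono (Ici_subset_Ici.2 ht.1)) T ⟨hT, le_rfl⟩

/-- On each `[a, T]` both trajectories stay in a compact set, where the field is Lipschitz. -/
lemma ODE_solution_unique_Ici_of_locallyLipschitz {v : E → E} (hv : LocallyLipschitz v)
    (hf : ∀ t ∈ Ici a, HasDerivWithinAt f (v (f t)) (Ici a) t)
    (hg : ∀ t ∈ Ici a, HasDerivWithinAt g (v (g t)) (Ici a) t) (ha : f a = g a) :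
    EqOn f g (Ici a) := by
  intro T hT
  have hfc : ContinuousOn f (Icc a T) := fun t ht ↦
    (hf t ht.1).continuousWithinAt.mono Icc_subset_Ici_self
  have hgc : ContinuousOn g (Icc a T) := fun t ht ↦
    (hg t ht.1).continuousWithinAt.mono Icc_subset_Ici_self
  set s := f '' Icc a T ∪ g '' Icc a T
  have hs : IsCompact s := (isCompact_Icc.image_of_continuousOn hfc).union
    (isCompact_Icc.image_of_continuousOn hgc)
  obtain ⟨L, hL⟩ := hv.locallyLipschitzOn.exists_lipschitzOnWith_of_compact hs
  exact ODE_solution_unique_of_mem_Icc_right (v := fun _ ↦ v) (s := fun _ ↦ s)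
    (fun _ _ ↦ hL) hfc (fun t ht ↦ (hf t ht.1).mono (Ici_subset_Ici.2 ht.1))
    (fun t ht ↦ .inl (mem_image_of_mem f (Ico_subset_Icc_self ht))) hgc
    (fun t ht ↦ (hg t ht.1).mono (Ici_subset_Ici.2 ht.1))
    (fun t ht ↦ .inr (mem_image_of_mem g (Ico_subset_Icc_self ht))) ha ⟨hT, le_rfl⟩

end ODE

section Logistic

open Real

variable {r K x₀ t : ℝ}

noncomputable def logisticSolution (r K x₀ t : ℝ) : ℝ :=
  K * x₀ / (x₀ + (K - x₀) * exp (-(r * K * t)))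

lemma logisticSolution_zero (hK : K ≠ 0) : logisticSolution r K x₀ 0 = x₀ := by
  simp [logisticSolution, hK]

/-- The denominator is `x₀ (1 - e) + K e` with `e = e^{-rKt} ∈ (0, 1]`. -/
lemma logisticSolution_denom_pos (hr : 0 ≤ r) (hK : 0 < K) (hx₀ : 0 < x₀) (ht : 0 ≤ t) :
    0 < x₀ + (K - x₀) * exp (-(r * K * t)) := by
  have he : exp (-(r * K * t)) ≤ 1 := exp_le_one_iff.2 (by have := mul_nonneg hr hK.le; nlinarith)
  nlinarith [exp_pos (-(r * K * t))]

lemma hasDerivAt_logisticSolution (hr : 0 ≤ r) (hK : 0 < K) (hx₀ : 0 < x₀) (ht : 0 ≤ t) :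
    HasDerivAt (logisticSolution r K x₀)
      (r * logisticSolution r K x₀ t * (K - logisticSolution r K x₀ t)) t := by
  have hD := logisticSolution_denom_pos hr hK hx₀ ht
  have hden : HasDerivAt (fun t ↦ x₀ + (K - x₀) * exp (-(r * K * t)))
      (-(r * K) * (x₀ + (K - x₀) * exp (-(r * K * t)) - x₀)) t :=
    (((hasDerivAt_id' t).const_mul (r * K)).fun_neg.exp.const_mul (K - x₀) |>.const_add x₀)
      |>.congr_deriv (by ring)
  refine ((hasDerivAt_const t (K * x₀)).fun_div hden hD.ne').congr_deriv ?_
  simp only [logisticSolution]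
  generalize x₀ + (K - x₀) * exp (-(r * K * t)) = D at hD ⊢
  field_simp
  ring

lemma tendsto_logisticSolution (hr : 0 < r) (hK : 0 < K) (hx₀ : x₀ ≠ 0) :
    Tendsto (logisticSolution r K x₀) atTop (𝓝 K) := by
  have he : Tendsto (fun t ↦ exp (-(r * K * t))) atTop (𝓝 0) :=
    tendsto_exp_atBot.comp <| tendsto_neg_atTop_atBot.comp <|
      tendsto_id.const_mul_atTop (mul_pos hr hK)
  have h : Tendsto (logisticSolution r K x₀) atTop (𝓝 (K * x₀ / (x₀ + (K - x₀) * 0))) :=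
    tendsto_const_nhds.div (tendsto_const_nhds.add (tendsto_const_nhds.mul he))
      (by simpa using hx₀)
  rwa [mul_zero, add_zero, mul_div_cancel_right₀ _ hx₀] at h

lemma eqOn_logisticSolution {x : ℝ → ℝ} (hr : 0 ≤ r) (hK : 0 < K)
    (hx : ∀ t ∈ Ici 0, HasDerivWithinAt x (r * x t * (K - x t)) (Ici 0) t) (hx₀ : 0 < x 0) :
    EqOn x (logisticSolution r K (x 0)) (Ici 0) :=
  ODE_solution_unique_Ici_of_locallyLipschitz (v := fun y ↦ r * y * (K - y))
    (ContDiff.locallyLipschitz (𝕂 := ℝ) (by fun_prop)) hx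
    (fun t ht ↦ (hasDerivAt_logisticSolution hr hK hx₀ ht).hasDerivWithinAt)
    (logisticSolution_zero hK.ne').symm

lemma tendsto_of_hasDerivWithinAt_logistic {x : ℝ → ℝ} (hr : 0 < r) (hK : 0 < K)
    (hx : ∀ t ∈ Ici 0, HasDerivWithinAt x (r * x t * (K - x t)) (Ici 0) t) (hx₀ : 0 < x 0) :
    Tendsto x atTop (𝓝 K) :=
  (tendsto_logisticSolution hr hK hx₀.ne').congr' <| eventuallyEq_of_mem (Ici_mem_atTop 0)
    (eqOn_logisticSolution hr.le hK hx hx₀).symm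

end Logistic

theorem stmt_5_general (β γ : ℝ) (hβ : 0 < β) (S I : ℝ → ℝ)
    (hS : ∀ t ∈ Set.Ici (0 : ℝ),
      HasDerivWithinAt S (-β * S t * I t + γ * I t) (Set.Ici 0) t)
    (hI : ∀ t ∈ Set.Ici (0 : ℝ),
      HasDerivWithinAt I (β * S t * I t - γ * I t) (Set.Ici 0) t)
    (hI0 : 0 < I 0) (N : ℝ) (hN : N = S 0 + I 0)
    (hR0 : γ < N * β) :
    Filter.Tendsto I Filter.atTop (nhds (N - γ / β)) ∧
      Filter.Tendsto S Filter.atTop (nhds (γ / β)) := by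
  have hsum : ∀ t ∈ Ici 0, S t + I t = N := fun t ht ↦ hN ▸
    eq_of_hasDerivWithinAt_zero_Ici
      (fun t ht ↦ ((hS t ht).add (hI t ht)).congr_deriv (by ring)) t ht
  have hK : 0 < N - γ / β := sub_pos.2 ((div_lt_iff₀ hβ).2 hR0)
  have hlogistic : ∀ t ∈ Ici 0, HasDerivWithinAt I (β * I t * (N - γ / β - I t)) (Ici 0) t := by
    intro t ht
    convert hI t ht using 1
    rw [← hsum t ht]
    field_simp
    ring
  have hIlim := tendsto_of_hasDerivWithinAt_logistic hβ hK hlogistic hI0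
  refine ⟨hIlim, ?_⟩
  have hSlim : Tendsto (fun t ↦ N - I t) atTop (𝓝 (γ / β)) := by
    have h := (tendsto_const_nhds (x := N)).sub hIlim
    rwa [sub_sub_cancel] at h
  exact hSlim.congr' <| eventuallyEq_of_mem (Ici_mem_atTop 0) fun t ht ↦ by
    linarith [hsum t ht]

/-- SIS ODE with mass action: if `R₀ = Nβ/γ > 1` (i.e. `Nβ > γ`), the endemic
equilibrium `(γ/β, N - γ/β)` is globally attractive. -/
theorem stmt_5 (β γ : ℝ) (hβ : 0 < β) (hγ : 0 < γ) (S I : ℝ → ℝ)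
    (hS : ∀ t ∈ Set.Ici (0 : ℝ),
      HasDerivWithinAt S (-β * S t * I t + γ * I t) (Set.Ici 0) t)
    (hI : ∀ t ∈ Set.Ici (0 : ℝ),
      HasDerivWithinAt I (β * S t * I t - γ * I t) (Set.Ici 0) t)
    (hS0 : 0 ≤ S 0) (hI0 : 0 < I 0) (N : ℝ) (hN : N = S 0 + I 0)
    (hR0 : γ < N * β) :
    Filter.Tendsto I Filter.atTop (nhds (N - γ / β)) ∧
      Filter.Tendsto S Filter.atTop (nhds (γ / β)) :=
  stmt_5_general β γ hβ S I hS hI hI0 N hN hR0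
end

section
/- Let Λ, β, γ, μ > 0 be constants with R₀ = Λβ/(γ+μ) ≤ 1. Let S, I : ℝ → ℝ be continuously differentiable on [0, ∞) with S'(t) = Λ - S(t) - β·S(t)·I(t) + γ·I(t) and I'(t) = β·S(t)·I(t) - (γ+μ)·I(t) for all t ≥ 0, and S(0) ≥ 0, I(0) ≥ 0. Then S(t) → Λ and I(t) → 0 as t → ∞. -/
/-!
`I` solves the linear equation `I' = (βS - γ - μ) I`, so it stays nonnegative. Along the flow
`S + I` has derivative `Λ - S - μI`, and for `V = β/2 (S + I - Λ)² + (1 + μ) I` the cross terms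
in `(S - Λ) I` cancel:
`V' = -β((S - Λ)² + μI²) - (1 + μ)(γ + μ - Λβ) I ≤ -β((S - Λ)² + μI²)` since `R₀ ≤ 1`.
Hence `V ≥ 0` decreases, and at a uniform rate while it stays above any positive level, so
`V → 0`; this forces `I → 0` and `S + I → Λ`.
-/

open Set Filter Topology Real

theorem le_add_mul_sub_of_hasDerivWithinAt_le {f f' : ℝ → ℝ} {a C s t : ℝ}
    (hf : ∀ x ∈ Ici a, HasDerivWithinAt f (f' x) (Ici a) x) (hf' : ∀ x ∈ Ici a, f' x ≤ C)
    (has : a ≤ s) (hst : s ≤ t) : f t ≤ f s + C * (t - s) := by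
  have hsub : ∀ x ∈ Icc s t, x ∈ Ici a := fun x hx => has.trans hx.1
  refine image_le_of_deriv_right_le_deriv_boundary (f' := f')
    (B := fun x => f s + C * (x - s)) (B' := fun _ => C)
    (fun x hx => (hf x (hsub x hx)).continuousWithinAt.mono fun y hy => hsub y hy)
    (fun x hx => (hf x (hsub x (Ico_subset_Icc_self hx))).mono
      (Ici_subset_Ici.2 (hsub x (Ico_subset_Icc_self hx))))
    (by simp) (by fun_prop)
    (fun x _ => by
      simpa using ((hasDerivWithinAt_id x _).sub_const s).const_mul C |>.const_add (f s))
    (fun x hx => hf' x (hsub x (Ico_subset_Icc_self hx))) ⟨hst, le_rfl⟩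

theorem nonneg_of_hasDerivWithinAt_mul_self {f c : ℝ → ℝ} {a t : ℝ} (hc : ContinuousOn c (Ici a))
    (hf : ∀ x ∈ Ici a, HasDerivWithinAt f (c x * f x) (Ici a) x) (ha : 0 ≤ f a) (ht : a ≤ t) :
    0 ≤ f t := by
  obtain ⟨K, hK⟩ :=
    isCompact_Icc.exists_bound_of_continuousOn (hc.mono (Icc_subset_Ici_self : Icc a t ⊆ Ici a))
  have hsub : ∀ x ∈ Icc a t, x ∈ Ici a := fun x hx => hx.1
  -- `-f` can never catch up with the barrier `ε e^{(K+1)(x-t)}`, which grows faster than `-f` can.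
  suffices h : ∀ ε > 0, -f t ≤ ε by
    simpa using le_of_forall_pos_le_add fun ε hε => (h ε hε).trans_eq (zero_add ε).symm
  intro ε hε
  have hB : ∀ x, HasDerivAt (fun y => ε * exp ((K + 1) * (y - t)))
      ((K + 1) * (ε * exp ((K + 1) * (x - t)))) x := fun x => by
    refine ((((hasDerivAt_id' x).sub_const t).const_mul (K + 1)).exp.const_mul ε).congr_deriv ?_
    ring
  simpa using image_le_of_deriv_right_lt_deriv_boundary' (f := fun x => -f x)
    (f' := fun x => -(c x * f x))
    (fun x hx => (hf x (hsub x hx)).continuousWithinAt.neg.mono fun y hy => hsub y hy)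
    (fun x hx => (hf x (hsub x (Ico_subset_Icc_self hx))).neg.mono
      (Ici_subset_Ici.2 (hsub x (Ico_subset_Icc_self hx))))
    (by linarith [mul_pos hε (exp_pos ((K + 1) * (a - t)))])
    (fun x _ => (hB x).continuousAt.continuousWithinAt)
    (fun x _ => (hB x).hasDerivWithinAt)
    (fun x hx hfx => by
      have hcx : c x ≤ K := (le_abs_self _).trans (hK x (Ico_subset_Icc_self hx))
      have hpos : 0 < ε * exp ((K + 1) * (x - t)) := by positivity
      have hcfx : -(c x * f x) = c x * (ε * exp ((K + 1) * (x - t))) := by rw [← hfx]; ring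
      nlinarith [mul_le_mul_of_nonneg_right hcx hpos.le])
    ⟨ht, le_rfl⟩

theorem tendsto_zero_of_hasDerivWithinAt_le_neg {V V' : ℝ → ℝ} {a : ℝ}
    (hV : ∀ t ∈ Ici a, HasDerivWithinAt V (V' t) (Ici a) t) (hV0 : ∀ t ∈ Ici a, 0 ≤ V t)
    (hV' : ∀ t ∈ Ici a, V' t ≤ 0)
    (hV'L : ∀ L > 0, ∃ δ > 0, ∀ t ∈ Ici a, L ≤ V t → V' t ≤ -δ) :
    Tendsto V atTop (𝓝 0) := by
  have hanti : ∀ s t, a ≤ s → s ≤ t → V t ≤ V s := fun s t has hst => by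
    simpa using le_add_mul_sub_of_hasDerivWithinAt_le hV hV' has hst
  refine tendsto_order.2 ⟨fun L hL => eventually_atTop.2 ⟨a, fun t ht => hL.trans_le (hV0 t ht)⟩,
    fun L hL => ?_⟩
  obtain ⟨T, hT, hVT⟩ : ∃ T ∈ Ici a, V T < L := by
    by_contra! hVL
    obtain ⟨δ, hδ, hV'δ⟩ := hV'L L hL
    have hT : a ≤ a + V a / δ + 1 := by linarith [div_nonneg (hV0 a (le_refl a)) hδ.le]
    have hdecay := le_add_mul_sub_of_hasDerivWithinAt_le hV
      (fun t ht => hV'δ t ht (hVL t ht)) (le_refl a) hT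
    have hVa : -δ * (a + V a / δ + 1 - a) = -V a - δ := by field_simp; ring
    linarith [hV0 _ hT]
  exact eventually_atTop.2 ⟨T, fun t ht => (hanti T t hT ht).trans_lt hVT⟩

noncomputable def sisLyapunov (Λ β μ s i : ℝ) : ℝ := β / 2 * (s + i - Λ) ^ 2 + (1 + μ) * i

theorem sisLyapunov_nonneg {Λ β μ s i : ℝ} (hβ : 0 ≤ β) (hμ : 0 ≤ μ) (hi : 0 ≤ i) :
    0 ≤ sisLyapunov Λ β μ s i := by
  unfold sisLyapunov
  have : 0 ≤ 1 + μ := by linarith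
  positivity

theorem HasDerivWithinAt.sisLyapunov {S I : ℝ → ℝ} {u : Set ℝ} {Λ β γ μ t : ℝ}
    (hS : HasDerivWithinAt S (Λ - S t - β * S t * I t + γ * I t) u t)
    (hI : HasDerivWithinAt I (β * S t * I t - (γ + μ) * I t) u t) :
    HasDerivWithinAt (fun t => sisLyapunov Λ β μ (S t) (I t))
      (-(β * ((S t - Λ) ^ 2 + μ * I t ^ 2)) - (1 + μ) * (γ + μ - Λ * β) * I t) u t :=
  (((((hS.add hI).sub_const Λ).pow 2).const_mul (β / 2)).add (hI.const_mul (1 + μ))).congr_deriv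
    (by simp only [Pi.add_apply]; ring)

theorem exists_pos_le_of_le_sisLyapunov {Λ β μ L : ℝ} (hβ : 0 < β) (hμ : 0 < μ) (hL : 0 < L) :
    ∃ δ > 0, ∀ s i, 0 ≤ i → L ≤ sisLyapunov Λ β μ s i → δ ≤ β * ((s - Λ) ^ 2 + μ * i ^ 2) := by
  set r := min 1 (L / (2 * β + 1 + μ))
  have hr : 0 < r := lt_min one_pos (by positivity)
  have hr1 : r ≤ 1 := min_le_left _ _
  have hrL : (2 * β + 1 + μ) * r ≤ L := by
    rw [← le_div_iff₀' (by positivity)]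
    exact min_le_right _ _
  refine ⟨β * (min 1 μ * r ^ 2), by positivity, fun s i hi hVL => ?_⟩
  by_contra! hsmall
  have hW : (s - Λ) ^ 2 + μ * i ^ 2 < min 1 μ * r ^ 2 := lt_of_mul_lt_mul_left hsmall hβ.le
  have hs : (s - Λ) ^ 2 < r ^ 2 := by
    nlinarith [min_le_left 1 μ, mul_nonneg hμ.le (sq_nonneg i)]
  have hir : i < r := by
    have : μ * i ^ 2 < μ * r ^ 2 := by nlinarith [min_le_right 1 μ, sq_nonneg (s - Λ)]
    nlinarith [lt_of_mul_lt_mul_left this hμ.le]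
  have hsum : (s + i - Λ) ^ 2 < 4 * r := by nlinarith [sq_nonneg (s - Λ - i)]
  have : sisLyapunov Λ β μ s i < (2 * β + 1 + μ) * r := by
    unfold sisLyapunov
    nlinarith [mul_lt_mul_of_pos_left hsum hβ]
  linarith

theorem tendsto_of_sisLyapunov_tendsto_zero {S I : ℝ → ℝ} {Λ β μ : ℝ} (hβ : 0 < β) (hμ : 0 ≤ μ)
    (hI : ∀ᶠ t in atTop, 0 ≤ I t)
    (hV : Tendsto (fun t => sisLyapunov Λ β μ (S t) (I t)) atTop (𝓝 0)) :
    Tendsto S atTop (𝓝 Λ) ∧ Tendsto I atTop (𝓝 0) := by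
  have hI0 : Tendsto I atTop (𝓝 0) := by
    refine squeeze_zero' hI (hI.mono fun t ht => ?_) hV
    unfold sisLyapunov
    nlinarith [sq_nonneg (S t + I t - Λ)]
  have hN : Tendsto (fun t => S t + I t - Λ) atTop (𝓝 0) := by
    refine squeeze_zero_norm' (hI.mono fun t ht => abs_le_sqrt ?_)
      (by simpa using (hV.const_mul (2 / β)).sqrt)
    unfold sisLyapunov
    field_simp
    nlinarith
  have hS := (hN.sub hI0).add_const Λ
  rw [sub_zero, zero_add] at hS
  exact ⟨hS.congr fun t => by ring, hI0⟩

theorem stmt_7_general (Λ β γ μ : ℝ) (hβ : 0 < β) (hγ : 0 < γ) (hμ : 0 < μ)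
    (hR0 : Λ * β / (γ + μ) ≤ 1) (S I : ℝ → ℝ)
    (hS : ∀ t ∈ Set.Ici (0 : ℝ),
      HasDerivWithinAt S (Λ - S t - β * S t * I t + γ * I t) (Set.Ici 0) t)
    (hI : ∀ t ∈ Set.Ici (0 : ℝ),
      HasDerivWithinAt I (β * S t * I t - (γ + μ) * I t) (Set.Ici 0) t)
    (hI0 : 0 ≤ I 0) :
    Filter.Tendsto S Filter.atTop (nhds Λ) ∧
      Filter.Tendsto I Filter.atTop (nhds 0) := by
  have hR : Λ * β ≤ γ + μ := (div_le_one (by positivity)).1 hR0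
  have hScont : ContinuousOn S (Ici 0) := fun t ht => (hS t ht).continuousWithinAt
  have hInonneg : ∀ t ∈ Ici (0 : ℝ), 0 ≤ I t := fun t =>
    nonneg_of_hasDerivWithinAt_mul_self (c := fun t => β * S t - (γ + μ)) (by fun_prop)
      (fun t ht => (hI t ht).congr_deriv (by ring)) hI0
  have hdiss : ∀ t ∈ Ici (0 : ℝ),
      -(β * ((S t - Λ) ^ 2 + μ * I t ^ 2)) - (1 + μ) * (γ + μ - Λ * β) * I t
        ≤ -(β * ((S t - Λ) ^ 2 + μ * I t ^ 2)) := fun t ht => by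
    have : 0 ≤ (1 + μ) * (γ + μ - Λ * β) * I t :=
      mul_nonneg (mul_nonneg (by linarith) (by linarith)) (hInonneg t ht)
    linarith
  refine tendsto_of_sisLyapunov_tendsto_zero hβ hμ.le (eventually_atTop.2 ⟨0, hInonneg⟩) ?_
  refine tendsto_zero_of_hasDerivWithinAt_le_neg (fun t ht => (hS t ht).sisLyapunov (hI t ht))
    (fun t ht => sisLyapunov_nonneg hβ.le hμ.le (hInonneg t ht))
    (fun t ht => (hdiss t ht).trans (neg_nonpos.2 (by positivity))) fun L hL => ?_
  obtain ⟨δ, hδ, hδL⟩ := exists_pos_le_of_le_sisLyapunov (Λ := Λ) hβ hμ hL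
  exact ⟨δ, hδ, fun t ht hLt => (hdiss t ht).trans (neg_le_neg (hδL _ _ (hInonneg t ht) hLt))⟩

/-- Homogeneous SIS system with mass action and linear birth-death: if
`R₀ = Λβ/(γ+μ) ≤ 1`, the disease-free equilibrium `(Λ, 0)` is globally
attractive. -/
theorem stmt_7 (Λ β γ μ : ℝ) (hΛ : 0 < Λ) (hβ : 0 < β) (hγ : 0 < γ) (hμ : 0 < μ)
    (hR0 : Λ * β / (γ + μ) ≤ 1) (S I : ℝ → ℝ)
    (hS : ∀ t ∈ Set.Ici (0 : ℝ),
      HasDerivWithinAt S (Λ - S t - β * S t * I t + γ * I t) (Set.Ici 0) t)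
    (hI : ∀ t ∈ Set.Ici (0 : ℝ),
      HasDerivWithinAt I (β * S t * I t - (γ + μ) * I t) (Set.Ici 0) t)
    (hSc : ContinuousOn (fun t => Λ - S t - β * S t * I t + γ * I t) (Set.Ici 0))
    (hIc : ContinuousOn (fun t => β * S t * I t - (γ + μ) * I t) (Set.Ici 0))
    (hS0 : 0 ≤ S 0) (hI0 : 0 ≤ I 0) :
    Filter.Tendsto S Filter.atTop (nhds Λ) ∧
      Filter.Tendsto I Filter.atTop (nhds 0) :=
  stmt_7_general Λ β γ μ hβ hγ hμ hR0 S I hS hI hI0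
end

section
/- Let Λ, β, γ, μ > 0 be constants with R₀ = Λβ/(γ+μ) > 1. Let S, I : ℝ → ℝ be continuously differentiable on [0, ∞) with S'(t) = Λ - S(t) - β·S(t)·I(t) + γ·I(t) and I'(t) = β·S(t)·I(t) - (γ+μ)·I(t) for all t ≥ 0, S(0) ≥ 0 and I(0) > 0. Then S(t) → (γ+μ)/β and I(t) → (Λ/μ)(1 - 1/R₀) as t → ∞. -/
/-!
`I' = (β S - (γ + μ)) I` keeps `I` positive. With `S* = (γ + μ) / β` and `I* = (Λ - S*) / μ`,
so that `Λ = S* + μ I*`, the function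
`V = (S + I - S* - I*)² / 2 + (1 + μ) / β · (I - I* - I* log (I / I*))`
satisfies `V' = -((S - S*)² + μ (I - I*)²)` along solutions. So `V` decreases; its sublevel sets
are bounded, hence so is the trajectory, which makes the dissipation `(S - S*)² + μ (I - I*)²`
uniformly continuous. Being integrable on `[0, ∞)` (its integral is at most `V(0)`), it tends to
`0` by Barbalat's lemma.
-/

open Filter Set Topology

theorem ne_zero_of_hasDerivAt_mul_self {f g : ℝ → ℝ} {a : ℝ} (hfc : ContinuousOn f (Ici a))
    (hf : ∀ t ∈ Ioi a, HasDerivAt f (g t * f t) t) (hg : ContinuousOn g (Ici a))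
    (ha : f a ≠ 0) {T : ℝ} (hT : a ≤ T) : f T ≠ 0 := by
  obtain ⟨K, hK⟩ :=
    isCompact_Icc.exists_bound_of_continuousOn (hg.mono (Icc_subset_Ici_self : Icc a T ⊆ Ici a))
  -- `(f ^ 2)' = 2 g f ^ 2 ≥ -2 K f ^ 2`, so `f ^ 2 * exp (2 K t)` cannot decrease.
  have hmono : MonotoneOn (fun t => f t ^ 2 * Real.exp (2 * K * t)) (Icc a T) := by
    refine monotoneOn_of_hasDerivWithinAt_nonneg (convex_Icc a T)
      (f' := fun t => 2 * f t ^ 2 * Real.exp (2 * K * t) * (g t + K))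
      (((hfc.mono Icc_subset_Ici_self).pow 2).mul (by fun_prop)) (fun t ht => ?_) fun t ht => ?_
    · rw [interior_Icc] at ht
      refine (((hf t ht.1).fun_pow 2).fun_mul ((hasDerivAt_const_mul (2 * K)).exp))
        |>.hasDerivWithinAt.congr_deriv ?_
      push_cast
      ring
    · rw [interior_Icc] at ht
      have hgK : 0 ≤ g t + K :=
        neg_le_iff_add_nonneg.1 (neg_le_of_abs_le (hK t (Ioo_subset_Icc_self ht)))
      positivity
  intro hfT
  have h := hmono (left_mem_Icc.2 hT) (right_mem_Icc.2 hT) hT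
  simp only [hfT, zero_pow two_ne_zero, zero_mul] at h
  exact (h.trans_lt (by positivity)).false

theorem pos_of_hasDerivAt_mul_self {f g : ℝ → ℝ} {a : ℝ} (hfc : ContinuousOn f (Ici a))
    (hf : ∀ t ∈ Ioi a, HasDerivAt f (g t * f t) t) (hg : ContinuousOn g (Ici a))
    (ha : 0 < f a) {T : ℝ} (hT : a ≤ T) : 0 < f T := by
  by_contra! hfT
  obtain ⟨t, ht, hft⟩ :=
    intermediate_value_Icc' hT (hfc.mono Icc_subset_Ici_self) ⟨hfT, ha.le⟩
  exact ne_zero_of_hasDerivAt_mul_self hfc hf hg ha.ne' ht.1 hft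

theorem exists_tendsto_of_antitoneOn_Ioi {f : ℝ → ℝ} {a : ℝ} (hf : AntitoneOn f (Ioi a))
    (hb : BddBelow (f '' Ioi a)) : ∃ L, Tendsto f atTop (𝓝 L) := by
  have hmem : ∀ t, max t (a + 1) ∈ Ioi a := fun t => (lt_add_one a).trans_le (le_max_right _ _)
  have hanti : Antitone fun t => f (max t (a + 1)) := fun s t hst =>
    hf (hmem s) (hmem t) (max_le_max_right _ hst)
  refine ⟨_, (tendsto_atTop_ciInf hanti ?_).congr' ?_⟩
  · obtain ⟨m, hm⟩ := hb
    exact ⟨m, by rintro _ ⟨t, rfl⟩; exact hm (mem_image_of_mem f (hmem t))⟩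
  · filter_upwards [eventually_ge_atTop (a + 1)] with t ht
    rw [max_eq_left ht]

-- A form of Barbalat's lemma: `W` plays the role of `∫ q` from `t` to `∞`.
theorem tendsto_zero_of_hasDerivAt_neg {W q : ℝ → ℝ} {a : ℝ}
    (hW : ∀ t ∈ Ioi a, HasDerivAt W (-q t) t) (hWb : BddBelow (W '' Ioi a))
    (hq : ∀ t ∈ Ioi a, 0 ≤ q t) (hqu : UniformContinuousOn q (Ioi a)) :
    Tendsto q atTop (𝓝 0) := by
  have hanti : AntitoneOn W (Ioi a) :=
    antitoneOn_of_hasDerivWithinAt_nonpos (convex_Ioi a)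
      (fun t ht => (hW t ht).continuousAt.continuousWithinAt)
      (fun t ht => (hW t (interior_subset ht)).hasDerivWithinAt)
      fun t ht => neg_nonpos.2 (hq t (interior_subset ht))
  obtain ⟨L, hL⟩ := exists_tendsto_of_antitoneOn_Ioi hanti hWb
  rw [Metric.tendsto_nhds]
  intro ε hε
  obtain ⟨δ, hδ, hqδ⟩ := Metric.uniformContinuousOn_iff.1 hqu (ε / 2) (half_pos hε)
  have hdrop : Tendsto (fun t => W t - W (t + δ / 2)) atTop (𝓝 0) := by
    simpa using hL.sub (hL.comp (tendsto_atTop_add_const_right _ (δ / 2) tendsto_id))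
  filter_upwards [hdrop.eventually_lt_const (by positivity : (0:ℝ) < ε / 2 * (δ / 2)),
    eventually_gt_atTop a] with t hWt hat
  rw [Real.dist_eq, sub_zero, abs_of_nonneg (hq t hat)]
  by_contra! hqt
  -- `q ≥ ε / 2` on `[t, t + δ / 2]`, so `W` drops by at least `ε δ / 4` there.
  have htη : t ≤ t + δ / 2 := by linarith
  have hsub : Icc t (t + δ / 2) ⊆ Ioi a := fun u hu => hat.trans_le hu.1
  have key := (convex_Icc t (t + δ / 2)).image_sub_le_mul_sub_of_deriv_le (C := -(ε / 2))
    (fun u hu => (hW u (hsub hu)).continuousAt.continuousWithinAt)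
    (fun u hu => (hW u (hsub (interior_subset hu))).differentiableAt.differentiableWithinAt)
    (fun u hu => by
      have hu' := interior_subset hu
      rw [(hW u (hsub hu')).deriv, neg_le_neg_iff]
      have := hqδ t (hsub (left_mem_Icc.2 htη)) u (hsub hu') (by
        rw [Real.dist_eq, abs_lt]; constructor <;> linarith [hu'.1, hu'.2])
      rw [Real.dist_eq, abs_lt] at this
      linarith)
    t (left_mem_Icc.2 htη) (t + δ / 2) (right_mem_Icc.2 htη) htη
  linarith

theorem exists_lipschitzOnWith_of_hasDerivWithinAt_comp {E F : Type*} [NormedAddCommGroup E]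
    [ProperSpace E] [NormedAddCommGroup F] [NormedSpace ℝ F] {f : ℝ → F} {x : ℝ → E}
    {G : E → F} {s : Set ℝ} (hs : Convex ℝ s) (hG : Continuous G)
    (hx : Bornology.IsBounded (x '' s)) (hf : ∀ t ∈ s, HasDerivWithinAt f (G (x t)) s t) :
    ∃ K, LipschitzOnWith K f s := by
  obtain ⟨C, hC⟩ := hx.isCompact_closure.exists_bound_of_continuousOn hG.continuousOn
  refine ⟨C.toNNReal, hs.lipschitzOnWith_of_nnnorm_hasDerivWithin_le hf fun t ht => ?_⟩
  rw [← NNReal.coe_le_coe, coe_nnnorm]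
  exact (hC _ (subset_closure (mem_image_of_mem x ht))).trans (Real.le_coe_toNNReal C)

theorem tendsto_of_sq_sub_le {α : Type*} {l : Filter α} {f g : α → ℝ} {a : ℝ}
    (hg : Tendsto g l (𝓝 0)) (h : ∀ t, (f t - a) ^ 2 ≤ g t) : Tendsto f l (𝓝 a) := by
  have hsq := (squeeze_zero (fun t => sq_nonneg _) h hg).sqrt
  simp only [Real.sqrt_sq_eq_abs, Real.sqrt_zero] at hsq
  exact tendsto_iff_norm_sub_tendsto_zero.2 hsq

noncomputable def volterra (a x : ℝ) : ℝ := x - a - a * Real.log (x / a)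

theorem volterra_nonneg {a x : ℝ} (ha : 0 < a) (hx : 0 < x) : 0 ≤ volterra a x := by
  have h := mul_le_mul_of_nonneg_left (Real.log_le_sub_one_of_pos (div_pos hx ha)) ha.le
  rw [mul_sub, mul_div_cancel₀ x ha.ne', mul_one] at h
  unfold volterra
  linarith

theorem half_sub_le_volterra {a x : ℝ} (ha : 0 < a) (hx : 0 < x) :
    x / 2 - a * Real.log 2 ≤ volterra a x := by
  have h := volterra_nonneg ha (half_pos hx)
  have hlog : Real.log (x / a) = Real.log (x / 2 / a) + Real.log 2 := by
    rw [← Real.log_mul (by positivity) two_ne_zero]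
    field_simp
  unfold volterra at *
  rw [hlog]
  linarith

theorem HasDerivAt.volterra {f : ℝ → ℝ} {f' t a : ℝ} (hf : HasDerivAt f f' t) (ha : a ≠ 0)
    (hft : f t ≠ 0) : HasDerivAt (fun s => volterra a (f s)) (f' * (1 - a / f t)) t := by
  refine ((hf.sub_const a).sub (((hf.div_const a).log (div_ne_zero hft ha)).const_mul a))
    |>.congr_deriv ?_
  field_simp

namespace SIS

variable (Λ β γ μ : ℝ)

noncomputable def sStar : ℝ := (γ + μ) / β

noncomputable def iStar : ℝ := (Λ - sStar β γ μ) / μ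

-- The weight `(1 + μ) / β` makes the cross terms `(s - sStar) (i - iStar)` cancel in the
-- derivative along solutions.
noncomputable def lyapunov (s i : ℝ) : ℝ :=
  (s + i - sStar β γ μ - iStar Λ β γ μ) ^ 2 / 2 + (1 + μ) / β * volterra (iStar Λ β γ μ) i

noncomputable def dissipation (s i : ℝ) : ℝ :=
  (s - sStar β γ μ) ^ 2 + μ * (i - iStar Λ β γ μ) ^ 2

structure IsSolution (S I : ℝ → ℝ) : Prop where
  hasDerivWithinAt_S : ∀ t ∈ Ici (0 : ℝ),
    HasDerivWithinAt S (Λ - S t - β * S t * I t + γ * I t) (Ici 0) t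
  hasDerivWithinAt_I : ∀ t ∈ Ici (0 : ℝ),
    HasDerivWithinAt I (β * S t * I t - (γ + μ) * I t) (Ici 0) t

variable {Λ β γ μ}

theorem iStar_pos (hβ : 0 < β) (hμ : 0 < μ) (hγμ : 0 < γ + μ) (hR0 : 1 < Λ * β / (γ + μ)) :
    0 < iStar Λ β γ μ := by
  rw [one_lt_div hγμ] at hR0
  exact div_pos (sub_pos.2 ((div_lt_iff₀ hβ).2 hR0)) hμ

theorem iStar_eq (hΛ : Λ ≠ 0) (hβ : β ≠ 0) :
    iStar Λ β γ μ = Λ / μ * (1 - 1 / (Λ * β / (γ + μ))) := by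
  simp only [iStar, sStar]
  field_simp

theorem lyapunov_nonneg (hβ : 0 < β) (hμ : 0 < μ) (hiStar : 0 < iStar Λ β γ μ) (s : ℝ) {i : ℝ}
    (hi : 0 < i) : 0 ≤ lyapunov Λ β γ μ s i := by
  have := volterra_nonneg hiStar hi
  unfold lyapunov
  positivity

theorem dissipation_nonneg (hμ : 0 ≤ μ) (s i : ℝ) : 0 ≤ dissipation Λ β γ μ s i := by
  unfold dissipation
  positivity

theorem isBounded_lyapunov_sublevel (hβ : 0 < β) (hμ : 0 < μ) (hiStar : 0 < iStar Λ β γ μ)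
    (C : ℝ) : Bornology.IsBounded {p : ℝ × ℝ | 0 < p.2 ∧ lyapunov Λ β γ μ p.1 p.2 ≤ C} := by
  set N := sStar β γ μ + iStar Λ β γ μ
  set c := (1 + μ) / β
  have hc : 0 < c := by positivity
  set M := 2 * (C / c + iStar Λ β γ μ * Real.log 2)
  refine ((Metric.isBounded_Icc (N - M - √(2 * C)) (N + √(2 * C))).prod
    (Metric.isBounded_Icc 0 M)).subset ?_
  rintro ⟨s, i⟩ ⟨hi, hV⟩
  have hvol := volterra_nonneg hiStar hi
  have hsq : (s + i - N) ^ 2 ≤ 2 * C := by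
    have : 0 ≤ c * volterra (iStar Λ β γ μ) i := by positivity
    unfold lyapunov at hV
    linarith
  have hiM : i ≤ M := by
    have : c * (i / 2 - iStar Λ β γ μ * Real.log 2) ≤ C := by
      have := mul_le_mul_of_nonneg_left (half_sub_le_volterra hiStar hi) hc.le
      unfold lyapunov at hV
      nlinarith
    rw [← le_div_iff₀' hc] at this
    linarith
  have hsN := abs_le.1 (Real.abs_le_sqrt hsq)
  exact ⟨⟨by linarith, by linarith⟩, hi.le, hiM⟩

theorem hasDerivAt_lyapunov {S I : ℝ → ℝ} {t : ℝ} (hβ : β ≠ 0) (hμ : μ ≠ 0)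
    (hiStar : iStar Λ β γ μ ≠ 0)
    (hS : HasDerivAt S (Λ - S t - β * S t * I t + γ * I t) t)
    (hI : HasDerivAt I (β * S t * I t - (γ + μ) * I t) t) (hIt : I t ≠ 0) :
    HasDerivAt (fun t => lyapunov Λ β γ μ (S t) (I t)) (-dissipation Λ β γ μ (S t) (I t)) t := by
  refine ((((hS.fun_add hI).sub_const _).sub_const _).fun_pow 2 |>.div_const 2 |>.add
    ((hI.volterra hiStar hIt).const_mul _)).congr_deriv ?_
  have hsStar : β * sStar β γ μ = γ + μ := mul_div_cancel₀ _ hβ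
  have hiStar' : μ * iStar Λ β γ μ = Λ - sStar β γ μ := mul_div_cancel₀ _ hμ
  have hcross : (1 + μ) / β * ((β * S t * I t - (γ + μ) * I t) * (1 - iStar Λ β γ μ / I t)) =
      (1 + μ) * (S t - sStar β γ μ) * (I t - iStar Λ β γ μ) := by
    rw [← hsStar]
    field_simp
  rw [hcross, dissipation]
  linear_combination (sStar β γ μ + iStar Λ β γ μ - S t - I t) * hiStar'

theorem hasDerivAt_dissipation {S I : ℝ → ℝ} {t S' I' : ℝ} (hS : HasDerivAt S S' t)
    (hI : HasDerivAt I I' t) :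
    HasDerivAt (fun t => dissipation Λ β γ μ (S t) (I t))
      (2 * (S t - sStar β γ μ) * S' + μ * (2 * (I t - iStar Λ β γ μ) * I')) t :=
  (((hS.sub_const _).fun_pow 2).fun_add (((hI.sub_const _).fun_pow 2).const_mul μ)).congr_deriv
    (by push_cast; ring)

namespace IsSolution

variable {S I : ℝ → ℝ}

theorem continuousOn_S (h : IsSolution Λ β γ μ S I) : ContinuousOn S (Ici 0) :=
  fun t ht => (h.hasDerivWithinAt_S t ht).continuousWithinAt

theorem continuousOn_I (h : IsSolution Λ β γ μ S I) : ContinuousOn I (Ici 0) :=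
  fun t ht => (h.hasDerivWithinAt_I t ht).continuousWithinAt

theorem hasDerivAt_S (h : IsSolution Λ β γ μ S I) {t : ℝ} (ht : 0 < t) :
    HasDerivAt S (Λ - S t - β * S t * I t + γ * I t) t :=
  (h.hasDerivWithinAt_S t ht.le).hasDerivAt (Ici_mem_nhds ht)

theorem hasDerivAt_I (h : IsSolution Λ β γ μ S I) {t : ℝ} (ht : 0 < t) :
    HasDerivAt I (β * S t * I t - (γ + μ) * I t) t :=
  (h.hasDerivWithinAt_I t ht.le).hasDerivAt (Ici_mem_nhds ht)

theorem I_pos (h : IsSolution Λ β γ μ S I) (hI0 : 0 < I 0) {t : ℝ} (ht : 0 ≤ t) : 0 < I t :=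
  pos_of_hasDerivAt_mul_self h.continuousOn_I (g := fun t => β * S t - (γ + μ))
    (fun _ hu => (h.hasDerivAt_I hu).congr_deriv (by ring))
    (by have := h.continuousOn_S; fun_prop) hI0 ht

theorem antitoneOn_lyapunov (h : IsSolution Λ β γ μ S I) (hβ : 0 < β) (hμ : 0 < μ)
    (hiStar : 0 < iStar Λ β γ μ) (hI0 : 0 < I 0) :
    AntitoneOn (fun t => lyapunov Λ β γ μ (S t) (I t)) (Ici 0) := by
  have hlog : ContinuousOn (fun t => Real.log (I t / iStar Λ β γ μ)) (Ici 0) :=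
    (h.continuousOn_I.div_const _).log fun t ht => (div_pos (h.I_pos hI0 ht) hiStar).ne'
  have hS := h.continuousOn_S
  have hI := h.continuousOn_I
  refine antitoneOn_of_hasDerivWithinAt_nonpos (convex_Ici 0)
    (f' := fun t => -dissipation Λ β γ μ (S t) (I t)) (by simp only [lyapunov, volterra]; fun_prop)
    (fun t ht => ?_) fun t ht => ?_
  · rw [interior_Ici] at ht
    exact (hasDerivAt_lyapunov hβ.ne' hμ.ne' hiStar.ne' (h.hasDerivAt_S ht) (h.hasDerivAt_I ht)
      (h.I_pos hI0 ht.le).ne').hasDerivWithinAt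
  · exact neg_nonpos.2 (dissipation_nonneg hμ.le _ _)

theorem isBounded_image (h : IsSolution Λ β γ μ S I) (hβ : 0 < β) (hμ : 0 < μ)
    (hiStar : 0 < iStar Λ β γ μ) (hI0 : 0 < I 0) :
    Bornology.IsBounded ((fun t => (S t, I t)) '' Ici 0) :=
  (isBounded_lyapunov_sublevel hβ hμ hiStar _).subset <| by
    rintro _ ⟨t, ht, rfl⟩
    exact ⟨h.I_pos hI0 ht, h.antitoneOn_lyapunov hβ hμ hiStar hI0 self_mem_Ici ht ht⟩

theorem tendsto_dissipation (h : IsSolution Λ β γ μ S I) (hβ : 0 < β) (hμ : 0 < μ)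
    (hiStar : 0 < iStar Λ β γ μ) (hI0 : 0 < I 0) :
    Tendsto (fun t => dissipation Λ β γ μ (S t) (I t)) atTop (𝓝 0) := by
  -- `G` is the derivative of the dissipation along the trajectory; it is bounded because the
  -- trajectory is, so the dissipation is uniformly continuous.
  obtain ⟨K, hK⟩ := exists_lipschitzOnWith_of_hasDerivWithinAt_comp (convex_Ioi 0)
    (G := fun p : ℝ × ℝ => 2 * (p.1 - sStar β γ μ) * (Λ - p.1 - β * p.1 * p.2 + γ * p.2) +
      μ * (2 * (p.2 - iStar Λ β γ μ) * (β * p.1 * p.2 - (γ + μ) * p.2)))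
    (by fun_prop) ((h.isBounded_image hβ hμ hiStar hI0).subset (image_mono Ioi_subset_Ici_self))
    fun t ht => (hasDerivAt_dissipation (h.hasDerivAt_S ht) (h.hasDerivAt_I ht)).hasDerivWithinAt
  refine tendsto_zero_of_hasDerivAt_neg (fun t ht => hasDerivAt_lyapunov hβ.ne' hμ.ne'
      hiStar.ne' (h.hasDerivAt_S ht) (h.hasDerivAt_I ht) (h.I_pos hI0 (le_of_lt ht)).ne')
    ⟨0, ?_⟩ (fun t _ => dissipation_nonneg hμ.le _ _) hK.uniformContinuousOn
  rintro _ ⟨t, ht, rfl⟩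
  exact lyapunov_nonneg hβ hμ hiStar _ (h.I_pos hI0 (le_of_lt ht))

theorem tendsto_S (h : IsSolution Λ β γ μ S I) (hβ : 0 < β) (hμ : 0 < μ)
    (hiStar : 0 < iStar Λ β γ μ) (hI0 : 0 < I 0) : Tendsto S atTop (𝓝 (sStar β γ μ)) :=
  tendsto_of_sq_sub_le (h.tendsto_dissipation hβ hμ hiStar hI0) fun t =>
    le_add_of_nonneg_right (by positivity : 0 ≤ μ * (I t - iStar Λ β γ μ) ^ 2)

theorem tendsto_I (h : IsSolution Λ β γ μ S I) (hβ : 0 < β) (hμ : 0 < μ)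
    (hiStar : 0 < iStar Λ β γ μ) (hI0 : 0 < I 0) : Tendsto I atTop (𝓝 (iStar Λ β γ μ)) :=
  tendsto_of_sq_sub_le (zero_div μ ▸ (h.tendsto_dissipation hβ hμ hiStar hI0).div_const μ)
    fun t => (le_div_iff₀' hμ).2 (le_add_of_nonneg_left (sq_nonneg (S t - sStar β γ μ)))

end IsSolution

end SIS

theorem stmt_8_general (Λ β γ μ : ℝ) (hΛ : 0 < Λ) (hβ : 0 < β) (hγ : 0 < γ) (hμ : 0 < μ)
    (hR0 : 1 < Λ * β / (γ + μ)) (S I : ℝ → ℝ)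
    (hS : ∀ t ∈ Set.Ici (0 : ℝ),
      HasDerivWithinAt S (Λ - S t - β * S t * I t + γ * I t) (Set.Ici 0) t)
    (hI : ∀ t ∈ Set.Ici (0 : ℝ),
      HasDerivWithinAt I (β * S t * I t - (γ + μ) * I t) (Set.Ici 0) t)
    (hI0 : 0 < I 0) :
    Filter.Tendsto S Filter.atTop (nhds ((γ + μ) / β)) ∧
      Filter.Tendsto I Filter.atTop
        (nhds ((Λ / μ) * (1 - 1 / (Λ * β / (γ + μ))))) := by
  have hγμ : 0 < γ + μ := by linarith
  have hiStar := SIS.iStar_pos hβ hμ hγμ hR0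
  have hsol : SIS.IsSolution Λ β γ μ S I := ⟨hS, hI⟩
  rw [← SIS.iStar_eq hΛ.ne' hβ.ne']
  exact ⟨hsol.tendsto_S hβ hμ hiStar hI0, hsol.tendsto_I hβ hμ hiStar hI0⟩

/-- Homogeneous SIS system with mass action and linear birth-death: if
`R₀ = Λβ/(γ+μ) > 1`, the unique endemic equilibrium
`((γ+μ)/β, (Λ/μ)(1 - 1/R₀))` is globally attractive. -/
theorem stmt_8 (Λ β γ μ : ℝ) (hΛ : 0 < Λ) (hβ : 0 < β) (hγ : 0 < γ) (hμ : 0 < μ)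
    (hR0 : 1 < Λ * β / (γ + μ)) (S I : ℝ → ℝ)
    (hS : ∀ t ∈ Set.Ici (0 : ℝ),
      HasDerivWithinAt S (Λ - S t - β * S t * I t + γ * I t) (Set.Ici 0) t)
    (hI : ∀ t ∈ Set.Ici (0 : ℝ),
      HasDerivWithinAt I (β * S t * I t - (γ + μ) * I t) (Set.Ici 0) t)
    (hSc : ContinuousOn (fun t => Λ - S t - β * S t * I t + γ * I t) (Set.Ici 0))
    (hIc : ContinuousOn (fun t => β * S t * I t - (γ + μ) * I t) (Set.Ici 0))
    (hS0 : 0 ≤ S 0) (hI0 : 0 < I 0) :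
    Filter.Tendsto S Filter.atTop (nhds ((γ + μ) / β)) ∧
      Filter.Tendsto I Filter.atTop
        (nhds ((Λ / μ) * (1 - 1 / (Λ * β / (γ + μ))))) :=
  stmt_8_general Λ β γ μ hΛ hβ hγ hμ hR0 S I hS hI hI0
end

section
/- Let d_S, d_I > 0, let Λ, β, γ, μ : [0,1] → ℝ be continuous with β(x) > 0 for all x ∈ [0,1], let S, I : [0,1] → ℝ with S twice continuously differentiable on [0,1] and I(x) ≥ 0 for all x ∈ [0,1], suppose S'(0) = S'(1) = 0, and suppose -d_S·S''(x) = Λ(x) - S(x) - β(x)·S(x)·I(x) + γ(x)·I(x) for all x ∈ [0,1]. Then S(x) ≤ max{ max_{[0,1]} Λ, max_{[0,1]} (γ/β) } for all x ∈ [0,1]. -/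
open Set

private lemma sdnp_left
    (S S' S'' : ℝ → ℝ)
    (hS1 : ∀ x ∈ Icc (0:ℝ) 1, HasDerivWithinAt S (S' x) (Icc 0 1) x)
    (hS2 : ∀ x ∈ Icc (0:ℝ) 1, HasDerivWithinAt S' (S'' x) (Icc 0 1) x)
    (hS''c : ContinuousOn S'' (Icc 0 1))
    (x0 : ℝ) (hx0 : x0 ∈ Icc (0:ℝ) 1) (hx0lt : x0 < 1)
    (hS'x0 : S' x0 = 0)
    (hmax : ∀ y ∈ Icc (0:ℝ) 1, S y ≤ S x0) :
    S'' x0 ≤ 0 := by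
  by_contra hpos
  push_neg at hpos
  have hmem : S'' ⁻¹' Set.Ioi 0 ∈ nhdsWithin x0 (Icc 0 1) :=
    (hS''c x0 hx0) (Ioi_mem_nhds hpos)
  rw [Metric.mem_nhdsWithin_iff] at hmem
  obtain ⟨ε, hε, hball⟩ := hmem
  set b := min (x0 + ε/2) 1 with hb
  have hx0b : x0 < b := lt_min (by linarith) hx0lt
  have hb1 : b ≤ 1 := min_le_right _ _
  have hsub : Icc x0 b ⊆ Icc (0:ℝ) 1 := fun y hy =>
    ⟨le_trans hx0.1 hy.1, le_trans hy.2 hb1⟩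
  have hS''pos : ∀ y ∈ Icc x0 b, 0 < S'' y := by
    intro y hy
    apply hball
    refine ⟨?_, hsub hy⟩
    rw [Metric.mem_ball, Real.dist_eq, abs_lt]
    have h2 : y ≤ x0 + ε/2 := le_trans hy.2 (min_le_left _ _)
    constructor <;> [linarith [hy.1]; linarith]
  have hint : ∀ y ∈ Ioo x0 b, 0 < y ∧ y < 1 := fun y hy =>
    ⟨lt_of_le_of_lt hx0.1 hy.1, lt_of_lt_of_le hy.2 hb1⟩
  have hS'mono : StrictMonoOn S' (Icc x0 b) := by
    apply strictMonoOn_of_deriv_pos (convex_Icc _ _)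
    · exact fun y hy => ((hS2 y (hsub hy)).continuousWithinAt).mono hsub
    · intro y hy
      rw [interior_Icc] at hy
      obtain ⟨hy0, hy1⟩ := hint y hy
      have hd : HasDerivAt S' (S'' y) y :=
        (hS2 y (hsub ⟨hy.1.le, hy.2.le⟩)).hasDerivAt (Icc_mem_nhds hy0 hy1)
      rw [hd.deriv]
      exact hS''pos y ⟨hy.1.le, hy.2.le⟩
  have hS'pos : ∀ y ∈ Ioo x0 b, 0 < S' y := by
    intro y hy
    have := hS'mono ⟨le_refl _, hx0b.le⟩ ⟨hy.1.le, hy.2.le⟩ hy.1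
    rw [hS'x0] at this
    exact this
  have hSmono : StrictMonoOn S (Icc x0 b) := by
    apply strictMonoOn_of_deriv_pos (convex_Icc _ _)
    · exact fun y hy => ((hS1 y (hsub hy)).continuousWithinAt).mono hsub
    · intro y hy
      rw [interior_Icc] at hy
      obtain ⟨hy0, hy1⟩ := hint y hy
      have hd : HasDerivAt S (S' y) y :=
        (hS1 y (hsub ⟨hy.1.le, hy.2.le⟩)).hasDerivAt (Icc_mem_nhds hy0 hy1)
      rw [hd.deriv]
      exact hS'pos y hy
  have h1 : S x0 < S b := hSmono ⟨le_refl _, hx0b.le⟩ ⟨hx0b.le, le_refl _⟩ hx0b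
  have h2 : S b ≤ S x0 := hmax b (hsub ⟨hx0b.le, le_refl _⟩)
  linarith

private lemma sdnp_right
    (S S' S'' : ℝ → ℝ)
    (hS1 : ∀ x ∈ Icc (0:ℝ) 1, HasDerivWithinAt S (S' x) (Icc 0 1) x)
    (hS2 : ∀ x ∈ Icc (0:ℝ) 1, HasDerivWithinAt S' (S'' x) (Icc 0 1) x)
    (hS''c : ContinuousOn S'' (Icc 0 1))
    (hS'1 : S' 1 = 0)
    (hmax : ∀ y ∈ Icc (0:ℝ) 1, S y ≤ S 1) :
    S'' 1 ≤ 0 := by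
  by_contra hpos
  push_neg at hpos
  have h1mem : (1:ℝ) ∈ Icc (0:ℝ) 1 := ⟨by norm_num, le_refl _⟩
  have hmem : S'' ⁻¹' Set.Ioi 0 ∈ nhdsWithin 1 (Icc 0 1) :=
    (hS''c 1 h1mem) (Ioi_mem_nhds hpos)
  rw [Metric.mem_nhdsWithin_iff] at hmem
  obtain ⟨ε, hε, hball⟩ := hmem
  set a := max (1 - ε/2) 0 with ha
  have ha1 : a < 1 := max_lt (by linarith) one_pos
  have ha0 : (0:ℝ) ≤ a := le_max_right _ _
  have hsub : Icc a 1 ⊆ Icc (0:ℝ) 1 := fun y hy => ⟨le_trans ha0 hy.1, hy.2⟩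
  have hS''pos : ∀ y ∈ Icc a 1, 0 < S'' y := by
    intro y hy
    apply hball
    refine ⟨?_, hsub hy⟩
    rw [Metric.mem_ball, Real.dist_eq, abs_lt]
    have h2 : 1 - ε/2 ≤ y := le_trans (le_max_left _ _) hy.1
    constructor <;> [linarith; linarith [hy.2]]
  have hint : ∀ y ∈ Ioo a 1, 0 < y ∧ y < 1 := fun y hy =>
    ⟨lt_of_le_of_lt ha0 hy.1, hy.2⟩
  have hS'mono : StrictMonoOn S' (Icc a 1) := by
    apply strictMonoOn_of_deriv_pos (convex_Icc _ _)
    · exact fun y hy => ((hS2 y (hsub hy)).continuousWithinAt).mono hsub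
    · intro y hy
      rw [interior_Icc] at hy
      obtain ⟨hy0, hy1⟩ := hint y hy
      have hd : HasDerivAt S' (S'' y) y :=
        (hS2 y (hsub ⟨hy.1.le, hy.2.le⟩)).hasDerivAt (Icc_mem_nhds hy0 hy1)
      rw [hd.deriv]
      exact hS''pos y ⟨hy.1.le, hy.2.le⟩
  have hS'neg : ∀ y ∈ Ioo a 1, S' y < 0 := by
    intro y hy
    have := hS'mono ⟨hy.1.le, hy.2.le⟩ ⟨ha1.le, le_refl _⟩ hy.2
    rw [hS'1] at this
    exact this
  have hSanti : StrictAntiOn S (Icc a 1) := by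
    apply strictAntiOn_of_deriv_neg (convex_Icc _ _)
    · exact fun y hy => ((hS1 y (hsub hy)).continuousWithinAt).mono hsub
    · intro y hy
      rw [interior_Icc] at hy
      obtain ⟨hy0, hy1⟩ := hint y hy
      have hd : HasDerivAt S (S' y) y :=
        (hS1 y (hsub ⟨hy.1.le, hy.2.le⟩)).hasDerivAt (Icc_mem_nhds hy0 hy1)
      rw [hd.deriv]
      exact hS'neg y hy
  have h1 : S 1 < S a := hSanti ⟨le_refl _, ha1.le⟩ ⟨ha1.le, le_refl _⟩ ha1
  have h2 : S a ≤ S 1 := hmax a (hsub ⟨le_refl _, ha1.le⟩)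
  linarith

/-- A priori upper bound for `S` in the 1-D steady state problem:
`S ≤ max { max Λ, max (γ/β) }` on `[0,1]`, uniformly in `d_S, d_I`. -/
theorem stmt_11 (dS dI : ℝ) (hdS : 0 < dS) (hdI : 0 < dI)
    (Λ β γ μ : ℝ → ℝ)
    (hΛc : ContinuousOn Λ (Set.Icc 0 1)) (hβc : ContinuousOn β (Set.Icc 0 1))
    (hγc : ContinuousOn γ (Set.Icc 0 1)) (hμc : ContinuousOn μ (Set.Icc 0 1))
    (hβpos : ∀ x ∈ Set.Icc (0 : ℝ) 1, 0 < β x)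
    (S S' S'' I : ℝ → ℝ)
    (hS1 : ∀ x ∈ Set.Icc (0 : ℝ) 1, HasDerivWithinAt S (S' x) (Set.Icc 0 1) x)
    (hS2 : ∀ x ∈ Set.Icc (0 : ℝ) 1, HasDerivWithinAt S' (S'' x) (Set.Icc 0 1) x)
    (hS''c : ContinuousOn S'' (Set.Icc 0 1))
    (hI0 : ∀ x ∈ Set.Icc (0 : ℝ) 1, 0 ≤ I x)
    (hbc0 : S' 0 = 0) (hbc1 : S' 1 = 0)
    (heq : ∀ x ∈ Set.Icc (0 : ℝ) 1,
      -dS * S'' x = Λ x - S x - β x * S x * I x + γ x * I x) :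
    ∀ x ∈ Set.Icc (0 : ℝ) 1,
      S x ≤ max (sSup (Λ '' Set.Icc 0 1))
          (sSup ((fun x => γ x / β x) '' Set.Icc 0 1)) := by
  set M := max (sSup (Λ '' Set.Icc (0:ℝ) 1))
      (sSup ((fun x => γ x / β x) '' Set.Icc (0:ℝ) 1)) with hMdef
  have hScont : ContinuousOn S (Set.Icc (0:ℝ) 1) :=
    fun y hy => (hS1 y hy).continuousWithinAt
  obtain ⟨x0, hx0, hmax'⟩ := isCompact_Icc.exists_isMaxOn
    (Set.nonempty_Icc.mpr zero_le_one) hScont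
  have hmax : ∀ y ∈ Set.Icc (0:ℝ) 1, S y ≤ S x0 := fun y hy => hmax' hy
  have hS''le : S'' x0 ≤ 0 := by
    rcases eq_or_lt_of_le hx0.2 with h1 | h1
    · subst h1
      exact sdnp_right S S' S'' hS1 hS2 hS''c hbc1 hmax
    · have hS'0 : S' x0 = 0 := by
        rcases eq_or_lt_of_le hx0.1 with h0 | h0
        · rw [← h0]; exact hbc0
        · have hnh : Set.Icc (0:ℝ) 1 ∈ nhds x0 := Icc_mem_nhds h0 h1
          have hd : HasDerivAt S (S' x0) x0 := (hS1 x0 hx0).hasDerivAt hnh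
          exact (hmax'.isLocalMax hnh).hasDerivAt_eq_zero hd
      exact sdnp_left S S' S'' hS1 hS2 hS''c x0 hx0 h1 hS'0 hmax
  have hbddΛ : BddAbove (Λ '' Set.Icc (0:ℝ) 1) :=
    (isCompact_Icc.image_of_continuousOn hΛc).bddAbove
  have hΛle : Λ x0 ≤ M :=
    le_trans (le_csSup hbddΛ ⟨x0, hx0, rfl⟩) (le_max_left _ _)
  have hgbc : ContinuousOn (fun x => γ x / β x) (Set.Icc (0:ℝ) 1) :=
    hγc.div hβc (fun y hy => (hβpos y hy).ne')
  have hbddg : BddAbove ((fun x => γ x / β x) '' Set.Icc (0:ℝ) 1) :=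
    (isCompact_Icc.image_of_continuousOn hgbc).bddAbove
  have hgble : γ x0 / β x0 ≤ M :=
    le_trans (le_csSup hbddg ⟨x0, hx0, rfl⟩) (le_max_right _ _)
  have hβp := hβpos x0 hx0
  have hγle : γ x0 ≤ M * β x0 := (div_le_iff₀ hβp).mp hgble
  have hkey : S x0 ≤ M := by
    have h := heq x0 hx0
    have hIpos := hI0 x0 hx0
    have htpos : (0:ℝ) < 1 + β x0 * I x0 := by positivity
    have hmul : S x0 * (1 + β x0 * I x0) ≤ M * (1 + β x0 * I x0) := by
      nlinarith [mul_nonneg hdS.le (neg_nonneg.mpr hS''le),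
        mul_le_mul_of_nonneg_right hγle hIpos]
    exact le_of_mul_le_mul_right hmul htpos
  intro x hx
  exact le_trans (hmax x hx) hkey
end

section
/- Let d_S, d_I > 0, let Λ, β, γ, μ : [0,1] → ℝ be continuous and positive on [0,1], let S, I : [0,1] → ℝ with S twice continuously differentiable on [0,1] and I(x) ≥ 0 for all x ∈ [0,1], suppose S'(0) = S'(1) = 0, and suppose -d_S·S''(x) = Λ(x) - S(x) - β(x)·S(x)·I(x) + γ(x)·I(x) for all x ∈ [0,1]. Then S(x) ≥ min{ min_{[0,1]} Λ, min_{[0,1]} (γ/β) } > 0 for all x ∈ [0,1]. -/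
open Set

/-- A priori positive lower bound for `S` in the 1-D steady state problem:
`S ≥ min { min Λ, min (γ/β) } > 0` on `[0,1]`, uniformly in `d_S, d_I`. -/
theorem stmt_12 (dS dI : ℝ) (hdS : 0 < dS) (hdI : 0 < dI)
    (Λ β γ μ : ℝ → ℝ)
    (hΛc : ContinuousOn Λ (Set.Icc 0 1)) (hβc : ContinuousOn β (Set.Icc 0 1))
    (hγc : ContinuousOn γ (Set.Icc 0 1)) (hμc : ContinuousOn μ (Set.Icc 0 1))
    (hΛpos : ∀ x ∈ Set.Icc (0 : ℝ) 1, 0 < Λ x)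
    (hβpos : ∀ x ∈ Set.Icc (0 : ℝ) 1, 0 < β x)
    (hγpos : ∀ x ∈ Set.Icc (0 : ℝ) 1, 0 < γ x)
    (hμpos : ∀ x ∈ Set.Icc (0 : ℝ) 1, 0 < μ x)
    (S S' S'' I : ℝ → ℝ)
    (hS1 : ∀ x ∈ Set.Icc (0 : ℝ) 1, HasDerivWithinAt S (S' x) (Set.Icc 0 1) x)
    (hS2 : ∀ x ∈ Set.Icc (0 : ℝ) 1, HasDerivWithinAt S' (S'' x) (Set.Icc 0 1) x)
    (hS''c : ContinuousOn S'' (Set.Icc 0 1))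
    (hI0 : ∀ x ∈ Set.Icc (0 : ℝ) 1, 0 ≤ I x)
    (hbc0 : S' 0 = 0) (hbc1 : S' 1 = 0)
    (heq : ∀ x ∈ Set.Icc (0 : ℝ) 1,
      -dS * S'' x = Λ x - S x - β x * S x * I x + γ x * I x) :
    (∀ x ∈ Set.Icc (0 : ℝ) 1,
      min (sInf (Λ '' Set.Icc 0 1))
          (sInf ((fun x => γ x / β x) '' Set.Icc 0 1)) ≤ S x) ∧
    0 < min (sInf (Λ '' Set.Icc 0 1))
        (sInf ((fun x => γ x / β x) '' Set.Icc 0 1)) := by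
  have hK : IsCompact (Icc (0:ℝ) 1) := isCompact_Icc
  have hne : (Icc (0:ℝ) 1).Nonempty := ⟨0, by norm_num⟩
  have hγβc : ContinuousOn (fun x => γ x / β x) (Icc 0 1) :=
    hγc.div hβc (fun x hx => (hβpos x hx).ne')
  have hKA : IsCompact (Λ '' Icc (0:ℝ) 1) := hK.image_of_continuousOn hΛc
  have hKB : IsCompact ((fun x => γ x / β x) '' Icc (0:ℝ) 1) := hK.image_of_continuousOn hγβc
  set A := sInf (Λ '' Icc (0:ℝ) 1) with hA
  set B := sInf ((fun x => γ x / β x) '' Icc (0:ℝ) 1) with hB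
  have hApos : 0 < A := by
    obtain ⟨y, hy, hyv⟩ := hKA.sInf_mem (hne.image _)
    rw [hA, ← hyv]; exact hΛpos y hy
  have hBpos : 0 < B := by
    obtain ⟨y, hy, hyv⟩ := hKB.sInf_mem (hne.image _)
    rw [hB, ← hyv]; exact div_pos (hγpos y hy) (hβpos y hy)
  have hAle : ∀ x ∈ Icc (0:ℝ) 1, A ≤ Λ x :=
    fun x hx => csInf_le hKA.bddBelow (mem_image_of_mem _ hx)
  have hBle : ∀ x ∈ Icc (0:ℝ) 1, B ≤ γ x / β x :=
    fun x hx => csInf_le hKB.bddBelow (mem_image_of_mem _ hx)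
  have hcpos : 0 < min A B := lt_min hApos hBpos
  have hSc : ContinuousOn S (Icc (0:ℝ) 1) := fun x hx => (hS1 x hx).continuousWithinAt
  have hS'c : ContinuousOn S' (Icc (0:ℝ) 1) := fun x hx => (hS2 x hx).continuousWithinAt
  obtain ⟨x₀, hx₀, hmin⟩ := hK.exists_isMinOn hne hSc
  suffices h : min A B ≤ S x₀ by
    exact ⟨fun x hx => le_trans h (isMinOn_iff.mp hmin x hx), hcpos⟩
  by_contra hlt
  push_neg at hlt
  -- the second derivative is negative at the minimum point
  have hS''neg : S'' x₀ < 0 := by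
    have h1 : min A B ≤ Λ x₀ := le_trans (min_le_left _ _) (hAle x₀ hx₀)
    have h2 : min A B ≤ γ x₀ / β x₀ := le_trans (min_le_right _ _) (hBle x₀ hx₀)
    have hβ := hβpos x₀ hx₀
    have hI := hI0 x₀ hx₀
    have hgb : β x₀ * S x₀ < γ x₀ := by
      have hlt2 : S x₀ < γ x₀ / β x₀ := lt_of_lt_of_le hlt h2
      calc β x₀ * S x₀ < β x₀ * (γ x₀ / β x₀) := mul_lt_mul_of_pos_left hlt2 hβ
        _ = γ x₀ := by field_simp
    have he := heq x₀ hx₀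
    nlinarith [mul_nonneg hI (sub_nonneg.mpr hgb.le), sub_pos.mpr (lt_of_lt_of_le hlt h1)]
  -- S'' < 0 on a neighborhood of x₀ within [0,1]
  have hnb : S'' ⁻¹' Iio 0 ∈ nhdsWithin x₀ (Icc (0:ℝ) 1) :=
    (hS''c x₀ hx₀) (Iio_mem_nhds hS''neg)
  rw [Metric.mem_nhdsWithin_iff] at hnb
  obtain ⟨δ, hδ, hball⟩ := hnb
  rcases lt_or_eq_of_le hx₀.2 with hx1 | hx1
  · -- case x₀ < 1 : move right
    have hS'x₀ : S' x₀ = 0 := by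
      rcases eq_or_lt_of_le hx₀.1 with h0 | h0
      · rw [← h0]; exact hbc0
      · have hnhds : Icc (0:ℝ) 1 ∈ nhds x₀ := Icc_mem_nhds h0 hx1
        exact (hmin.isLocalMin hnhds).hasDerivAt_eq_zero ((hS1 x₀ hx₀).hasDerivAt hnhds)
    set b := min 1 (x₀ + δ/2) with hbdef
    have hx₀b : x₀ < b := lt_min hx1 (by linarith)
    have hb1 : b ≤ 1 := min_le_left _ _
    have hbδ : b ≤ x₀ + δ/2 := min_le_right _ _
    have hsub : Icc x₀ b ⊆ Icc (0:ℝ) 1 := Icc_subset_Icc hx₀.1 hb1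
    have hsub2 : Icc x₀ b ⊆ Metric.ball x₀ δ := by
      intro x hx
      rw [Metric.mem_ball, Real.dist_eq, abs_lt]
      exact ⟨by linarith [hx.1], by linarith [hx.2]⟩
    have hneg : ∀ x ∈ Icc x₀ b, S'' x < 0 := fun x hx => hball ⟨hsub2 hx, hsub hx⟩
    have hint : ∀ x ∈ Ioo x₀ b, HasDerivAt S' (S'' x) x ∧ HasDerivAt S (S' x) x := by
      intro x hx
      have hx01 : x ∈ Icc (0:ℝ) 1 := hsub ⟨hx.1.le, hx.2.le⟩
      have hn : Icc (0:ℝ) 1 ∈ nhds x :=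
        Icc_mem_nhds (lt_of_le_of_lt hx₀.1 hx.1) (lt_of_lt_of_le hx.2 hb1)
      exact ⟨(hS2 x hx01).hasDerivAt hn, (hS1 x hx01).hasDerivAt hn⟩
    have hanti : StrictAntiOn S' (Icc x₀ b) := by
      apply strictAntiOn_of_deriv_neg (convex_Icc _ _) (hS'c.mono hsub)
      intro x hx
      rw [interior_Icc] at hx
      rw [(hint x hx).1.deriv]
      exact hneg x ⟨hx.1.le, hx.2.le⟩
    have hSanti : StrictAntiOn S (Icc x₀ b) := by
      apply strictAntiOn_of_deriv_neg (convex_Icc _ _) (hSc.mono hsub)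
      intro x hx
      rw [interior_Icc] at hx
      rw [(hint x hx).2.deriv]
      have := hanti (left_mem_Icc.mpr hx₀b.le) ⟨hx.1.le, hx.2.le⟩ hx.1
      rwa [hS'x₀] at this
    have hSb : S b < S x₀ :=
      hSanti (left_mem_Icc.mpr hx₀b.le) (right_mem_Icc.mpr hx₀b.le) hx₀b
    exact absurd (isMinOn_iff.mp hmin b (hsub (right_mem_Icc.mpr hx₀b.le))) (not_le.mpr hSb)
  · -- case x₀ = 1 : move left
    subst hx1
    set a := max 0 (1 - δ/2) with hadef
    have ha1 : a < 1 := max_lt one_pos (by linarith)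
    have ha0 : 0 ≤ a := le_max_left _ _
    have haδ : 1 - δ/2 ≤ a := le_max_right _ _
    have hsub : Icc a 1 ⊆ Icc (0:ℝ) 1 := Icc_subset_Icc ha0 le_rfl
    have hsub2 : Icc a 1 ⊆ Metric.ball 1 δ := by
      intro x hx
      rw [Metric.mem_ball, Real.dist_eq, abs_lt]
      exact ⟨by linarith [hx.1], by linarith [hx.2]⟩
    have hneg : ∀ x ∈ Icc a 1, S'' x < 0 := fun x hx => hball ⟨hsub2 hx, hsub hx⟩
    have hint : ∀ x ∈ Ioo a 1, HasDerivAt S' (S'' x) x ∧ HasDerivAt S (S' x) x := by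
      intro x hx
      have hx01 : x ∈ Icc (0:ℝ) 1 := hsub ⟨hx.1.le, hx.2.le⟩
      have hn : Icc (0:ℝ) 1 ∈ nhds x :=
        Icc_mem_nhds (lt_of_le_of_lt ha0 hx.1) hx.2
      exact ⟨(hS2 x hx01).hasDerivAt hn, (hS1 x hx01).hasDerivAt hn⟩
    have hanti : StrictAntiOn S' (Icc a 1) := by
      apply strictAntiOn_of_deriv_neg (convex_Icc _ _) (hS'c.mono hsub)
      intro x hx
      rw [interior_Icc] at hx
      rw [(hint x hx).1.deriv]
      exact hneg x ⟨hx.1.le, hx.2.le⟩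
    have hSmono : StrictMonoOn S (Icc a 1) := by
      apply strictMonoOn_of_deriv_pos (convex_Icc _ _) (hSc.mono hsub)
      intro x hx
      rw [interior_Icc] at hx
      rw [(hint x hx).2.deriv]
      have := hanti ⟨hx.1.le, hx.2.le⟩ (right_mem_Icc.mpr ha1.le) hx.2
      rwa [hbc1] at this
    have hSa : S a < S 1 :=
      hSmono (left_mem_Icc.mpr ha1.le) (right_mem_Icc.mpr ha1.le) ha1
    exact absurd (isMinOn_iff.mp hmin a (hsub (left_mem_Icc.mpr ha1.le))) (not_le.mpr hSa)
end

section
/- Let d_S, d_I > 0 and let Λ, β, γ, μ : [0,1] → ℝ be continuous and positive on [0,1]. Suppose S, I : [0,1] → ℝ are twice continuously differentiable on [0,1] with S > 0 and I > 0 on [0,1], satisfy S'(0) = S'(1) = 0 and I'(0) = I'(1) = 0, and solve -d_S·S''(x) = Λ(x) - S(x) - β(x)·S(x)·I(x) + γ(x)·I(x) and -d_I·I''(x) = β(x)·S(x)·I(x) - (γ(x)+μ(x))·I(x) for all x ∈ [0,1]. Then (min_{[0,1]} μ)·∫₀¹ I(x) dx ≤ ∫₀¹ Λ(x) dx and (min_{[0,1]}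 β)·∫₀¹ S(x)·I(x) dx ≤ (max_{[0,1]} γ + max_{[0,1]} μ)·∫₀¹ I(x) dx. -/
/-!
Integrating each equation over `[0,1]`, the diffusion terms drop out because the Neumann
conditions make `∫ u'' = u'(1) - u'(0) = 0`. This leaves the balance laws
`∫ Λ = ∫ S + ∫ β S I - ∫ γ I` and `∫ β S I = ∫ γ I + ∫ μ I`; together they give
`∫ Λ = ∫ S + ∫ μ I ≥ (min μ) ∫ I`, and the second one gives
`(min β) ∫ S I ≤ ∫ β S I ≤ (max γ + max μ) ∫ I`, since `S, I > 0`.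
-/

open Set intervalIntegral

section Interval

variable {a b : ℝ}

theorem integral_eq_sub_of_hasDerivWithinAt_Icc (hab : a ≤ b) {f f' : ℝ → ℝ}
    (hf : ∀ x ∈ Icc a b, HasDerivWithinAt f (f' x) (Icc a b) x)
    (hf' : IntervalIntegrable f' MeasureTheory.volume a b) :
    ∫ x in a..b, f' x = f b - f a :=
  integral_eq_sub_of_hasDerivAt_of_le hab (fun x hx => (hf x hx).continuousWithinAt)
    (fun x hx => (hf x (Ioo_subset_Icc_self hx)).hasDerivAt (Icc_mem_nhds hx.1 hx.2)) hf'

theorem integral_eq_zero_of_neumann (hab : a ≤ b) {u' u'' F : ℝ → ℝ} (d : ℝ)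
    (hu : ∀ x ∈ Icc a b, HasDerivWithinAt u' (u'' x) (Icc a b) x)
    (hu'' : ContinuousOn u'' (Icc a b)) (ha : u' a = 0) (hb : u' b = 0)
    (heq : ∀ x ∈ Icc a b, -d * u'' x = F x) :
    ∫ x in a..b, F x = 0 := by
  rw [← integral_congr (fun x hx => heq x (uIcc_of_le hab ▸ hx)), integral_const_mul,
    integral_eq_sub_of_hasDerivWithinAt_Icc hab hu (hu''.intervalIntegrable_of_Icc hab),
    ha, hb, sub_zero, mul_zero]

variable {g h : ℝ → ℝ}

theorem sInf_image_mul_integral_le (hab : a ≤ b) (hg : ContinuousOn g (Icc a b))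
    (hh : ContinuousOn h (Icc a b)) (hh0 : ∀ x ∈ Icc a b, 0 ≤ h x) :
    sInf (g '' Icc a b) * ∫ x in a..b, h x ≤ ∫ x in a..b, g x * h x := by
  rw [← integral_const_mul]
  refine integral_mono_on hab ((hh.intervalIntegrable_of_Icc hab).const_mul _)
    ((hg.mul hh).intervalIntegrable_of_Icc hab) fun x hx => ?_
  exact mul_le_mul_of_nonneg_right
    (csInf_le (isCompact_Icc.image_of_continuousOn hg).bddBelow (mem_image_of_mem g hx))
    (hh0 x hx)

theorem integral_mul_le_sSup_image_mul_integral (hab : a ≤ b) (hg : ContinuousOn g (Icc a b))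
    (hh : ContinuousOn h (Icc a b)) (hh0 : ∀ x ∈ Icc a b, 0 ≤ h x) :
    ∫ x in a..b, g x * h x ≤ sSup (g '' Icc a b) * ∫ x in a..b, h x := by
  rw [← integral_const_mul]
  refine integral_mono_on hab ((hg.mul hh).intervalIntegrable_of_Icc hab)
    ((hh.intervalIntegrable_of_Icc hab).const_mul _) fun x hx => ?_
  exact mul_le_mul_of_nonneg_right
    (le_csSup (isCompact_Icc.image_of_continuousOn hg).bddAbove (mem_image_of_mem g hx))
    (hh0 x hx)

end Interval

theorem stmt_13_general (dS dI : ℝ)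
    (Λ β γ μ : ℝ → ℝ)
    (hΛc : ContinuousOn Λ (Set.Icc 0 1)) (hβc : ContinuousOn β (Set.Icc 0 1))
    (hγc : ContinuousOn γ (Set.Icc 0 1)) (hμc : ContinuousOn μ (Set.Icc 0 1))
    (S S' S'' I I' I'' : ℝ → ℝ)
    (hS1 : ∀ x ∈ Set.Icc (0 : ℝ) 1, HasDerivWithinAt S (S' x) (Set.Icc 0 1) x)
    (hS2 : ∀ x ∈ Set.Icc (0 : ℝ) 1, HasDerivWithinAt S' (S'' x) (Set.Icc 0 1) x)
    (hS''c : ContinuousOn S'' (Set.Icc 0 1))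
    (hI1 : ∀ x ∈ Set.Icc (0 : ℝ) 1, HasDerivWithinAt I (I' x) (Set.Icc 0 1) x)
    (hI2 : ∀ x ∈ Set.Icc (0 : ℝ) 1, HasDerivWithinAt I' (I'' x) (Set.Icc 0 1) x)
    (hI''c : ContinuousOn I'' (Set.Icc 0 1))
    (hSpos : ∀ x ∈ Set.Icc (0 : ℝ) 1, 0 < S x)
    (hIpos : ∀ x ∈ Set.Icc (0 : ℝ) 1, 0 < I x)
    (hbcS0 : S' 0 = 0) (hbcS1 : S' 1 = 0) (hbcI0 : I' 0 = 0) (hbcI1 : I' 1 = 0)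
    (heqS : ∀ x ∈ Set.Icc (0 : ℝ) 1,
      -dS * S'' x = Λ x - S x - β x * S x * I x + γ x * I x)
    (heqI : ∀ x ∈ Set.Icc (0 : ℝ) 1,
      -dI * I'' x = β x * S x * I x - (γ x + μ x) * I x) :
    sInf (μ '' Set.Icc 0 1) * (∫ x in (0:ℝ)..1, I x) ≤ (∫ x in (0:ℝ)..1, Λ x) ∧
    sInf (β '' Set.Icc 0 1) * (∫ x in (0:ℝ)..1, S x * I x)
      ≤ (sSup (γ '' Set.Icc 0 1) + sSup (μ '' Set.Icc 0 1))
          * (∫ x in (0:ℝ)..1, I x) := by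
  have h01 : (0 : ℝ) ≤ 1 := zero_le_one
  have hSc : ContinuousOn S (Icc 0 1) := fun x hx => (hS1 x hx).continuousWithinAt
  have hIc : ContinuousOn I (Icc 0 1) := fun x hx => (hI1 x hx).continuousWithinAt
  have hSI0 : ∀ x ∈ Icc (0 : ℝ) 1, 0 ≤ S x * I x :=
    fun x hx => (mul_pos (hSpos x hx) (hIpos x hx)).le
  have hI0 : ∀ x ∈ Icc (0 : ℝ) 1, 0 ≤ I x := fun x hx => (hIpos x hx).le
  have hint : ∀ {f : ℝ → ℝ}, ContinuousOn f (Icc 0 1) →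
      IntervalIntegrable f MeasureTheory.volume 0 1 :=
    fun hf => hf.intervalIntegrable_of_Icc h01
  have iΛ := hint hΛc
  have iS := hint hSc
  have iβSI : IntervalIntegrable (fun x => β x * S x * I x) _ 0 1 := hint ((hβc.mul hSc).mul hIc)
  have iγI : IntervalIntegrable (fun x => γ x * I x) _ 0 1 := hint (hγc.mul hIc)
  have iμI : IntervalIntegrable (fun x => μ x * I x) _ 0 1 := hint (hμc.mul hIc)
  have balanceS := integral_eq_zero_of_neumann h01 dS hS2 hS''c hbcS0 hbcS1 heqS
  have balanceI := integral_eq_zero_of_neumann h01 dI hI2 hI''c hbcI0 hbcI1 heqI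
  simp only [add_mul] at balanceI
  rw [integral_add ((iΛ.sub iS).sub iβSI) iγI, integral_sub (iΛ.sub iS) iβSI,
    integral_sub iΛ iS] at balanceS
  rw [integral_sub iβSI (iγI.add iμI), integral_add iγI iμI] at balanceI
  have hS_nonneg : 0 ≤ ∫ x in (0 : ℝ)..1, S x :=
    integral_nonneg h01 fun x hx => (hSpos x hx).le
  refine ⟨?_, ?_⟩
  · linarith [sInf_image_mul_integral_le h01 hμc hIc hI0]
  · have hβ : sInf (β '' Icc 0 1) * ∫ x in (0 : ℝ)..1, S x * I x ≤
        ∫ x in (0 : ℝ)..1, β x * S x * I x := by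
      simpa only [mul_assoc] using
        sInf_image_mul_integral_le (h := fun x => S x * I x) h01 hβc (hSc.mul hIc) hSI0
    linarith [integral_mul_le_sSup_image_mul_integral h01 hγc hIc hI0,
      integral_mul_le_sSup_image_mul_integral h01 hμc hIc hI0]

/-- L¹ a priori bounds for the 1-D steady state problem, obtained by integrating
both equations over `[0,1]` and using the Neumann boundary conditions. -/
theorem stmt_13 (dS dI : ℝ) (hdS : 0 < dS) (hdI : 0 < dI)
    (Λ β γ μ : ℝ → ℝ)
    (hΛc : ContinuousOn Λ (Set.Icc 0 1)) (hβc : ContinuousOn β (Set.Icc 0 1))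
    (hγc : ContinuousOn γ (Set.Icc 0 1)) (hμc : ContinuousOn μ (Set.Icc 0 1))
    (hΛpos : ∀ x ∈ Set.Icc (0 : ℝ) 1, 0 < Λ x)
    (hβpos : ∀ x ∈ Set.Icc (0 : ℝ) 1, 0 < β x)
    (hγpos : ∀ x ∈ Set.Icc (0 : ℝ) 1, 0 < γ x)
    (hμpos : ∀ x ∈ Set.Icc (0 : ℝ) 1, 0 < μ x)
    (S S' S'' I I' I'' : ℝ → ℝ)
    (hS1 : ∀ x ∈ Set.Icc (0 : ℝ) 1, HasDerivWithinAt S (S' x) (Set.Icc 0 1) x)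
    (hS2 : ∀ x ∈ Set.Icc (0 : ℝ) 1, HasDerivWithinAt S' (S'' x) (Set.Icc 0 1) x)
    (hS''c : ContinuousOn S'' (Set.Icc 0 1))
    (hI1 : ∀ x ∈ Set.Icc (0 : ℝ) 1, HasDerivWithinAt I (I' x) (Set.Icc 0 1) x)
    (hI2 : ∀ x ∈ Set.Icc (0 : ℝ) 1, HasDerivWithinAt I' (I'' x) (Set.Icc 0 1) x)
    (hI''c : ContinuousOn I'' (Set.Icc 0 1))
    (hSpos : ∀ x ∈ Set.Icc (0 : ℝ) 1, 0 < S x)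
    (hIpos : ∀ x ∈ Set.Icc (0 : ℝ) 1, 0 < I x)
    (hbcS0 : S' 0 = 0) (hbcS1 : S' 1 = 0) (hbcI0 : I' 0 = 0) (hbcI1 : I' 1 = 0)
    (heqS : ∀ x ∈ Set.Icc (0 : ℝ) 1,
      -dS * S'' x = Λ x - S x - β x * S x * I x + γ x * I x)
    (heqI : ∀ x ∈ Set.Icc (0 : ℝ) 1,
      -dI * I'' x = β x * S x * I x - (γ x + μ x) * I x) :
    sInf (μ '' Set.Icc 0 1) * (∫ x in (0:ℝ)..1, I x) ≤ (∫ x in (0:ℝ)..1, Λ x) ∧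
    sInf (β '' Set.Icc 0 1) * (∫ x in (0:ℝ)..1, S x * I x)
      ≤ (sSup (γ '' Set.Icc 0 1) + sSup (μ '' Set.Icc 0 1))
          * (∫ x in (0:ℝ)..1, I x) :=
  stmt_13_general dS dI Λ β γ μ hΛc hβc hγc hμc S S' S'' I I' I'' hS1 hS2 hS''c hI1 hI2 hI''c hSpos
    hIpos hbcS0 hbcS1 hbcI0 hbcI1 heqS heqI
end
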